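/- arXiv:1902.09086 — 2 statements merged into one kernel-verified Lean document; each statement's English description precedes it below -/
import Mathlib

section
/- Define φ : ℝ³ → ℂ on the unit ball by φ(r) = |r|^{α/2} exp(i |r|^β) (and 0 outside), with α = −1 + 3δ and β = −δ for small δ > 0. Then φ ∈ H¹ of the unit ball (both ∫₀¹ |φ|² r² dr and ∫₀¹ |∇φ|² r² dr are finite), while the associated current density j_φ = Im(φ* ∇φ) = r^α ∇(r^β) satisfies ∫₀¹ |j_φ|^p r² dr = +∞ for every p > 3/(2(1−δ)). -/
open MeasureTheory Set Real

/-! On `(0, 1)` each integrand is, up to a positive constant, a power `r ^ s`, integrable iff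
`-1 < s`. For the current the exponent is `(α + β - 1) p + 2 = (2δ - 2) p + 2`, which exceeds
`-1` exactly when `p < 3 / (2 (1 - δ))`. -/

theorem const_mul_rpow_rpow_mul_pow {c r : ℝ} (hc : 0 ≤ c) (hr : 0 < r) (s p : ℝ) (n : ℕ) :
    (c * r ^ s) ^ p * r ^ n = c ^ p * r ^ (s * p + n) := by
  rw [mul_rpow hc (rpow_nonneg hr.le _), ← rpow_mul hr.le, rpow_add hr, rpow_natCast, mul_assoc]

theorem integrableOn_Ioo_const_mul_rpow_rpow_mul_pow_iff {c t : ℝ} (hc : 0 < c) (ht : 0 < t)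
    (s p : ℝ) (n : ℕ) :
    IntegrableOn (fun r : ℝ => (c * r ^ s) ^ p * r ^ n) (Ioo 0 t) ↔ -1 < s * p + n := by
  rw [integrableOn_congr_fun (fun r hr => const_mul_rpow_rpow_mul_pow hc.le hr.1 s p n)
      measurableSet_Ioo, IntegrableOn,
    integrable_const_mul_iff (rpow_pos_of_pos hc p).ne'.isUnit, ← IntegrableOn,
    intervalIntegral.integrableOn_Ioo_rpow_iff ht]

/-- Proposition 5 (counterexample): with `α = -1 + 3δ`, `β = -δ` (`0 < δ < 1`), the radial
wavefunction `φ(r) = r^{α/2} e^{i r^β}` on the unit ball has finite `H¹`-norm (both radial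
integrals `∫₀¹ |φ|² r² dr` and `∫₀¹ |∇φ|² r² dr` are finite), while its current density,
of magnitude `|j_φ| = |β| r^{α+β-1}`, satisfies `∫₀¹ |j_φ|^p r² dr = +∞` for every
`p > 3/(2(1-δ))`. -/
theorem current_not_in_Lp_counterexample (δ : ℝ) (hδ : 0 < δ) (hδ1 : δ < 1) :
    let α : ℝ := -1 + 3 * δ
    let β : ℝ := -δ
    -- ∫₀¹ |φ|² r² dr < ∞
    IntegrableOn (fun r : ℝ => r ^ (α + 2)) (Ioo 0 1) volume ∧
    -- ∫₀¹ |∇φ|² r² dr < ∞, with |∇φ|² = (α/2)² r^{α-2} + β² r^{α+2β-2} times r²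
    IntegrableOn (fun r : ℝ => (α / 2) ^ 2 * r ^ α + β ^ 2 * r ^ (α + 2 * β))
      (Ioo 0 1) volume ∧
    -- ∫₀¹ |j_φ|^p r² dr = +∞ for all p > 3/(2(1-δ))
    (∀ p : ℝ, 3 / (2 * (1 - δ)) < p →
      ¬ IntegrableOn (fun r : ℝ => (|β| * r ^ (α + β - 1)) ^ p * r ^ 2)
        (Ioo 0 1) volume) := by
  intro α β
  have integrableOn_rpow_iff (s : ℝ) : IntegrableOn (fun r : ℝ => r ^ s) (Ioo 0 1) ↔ -1 < s :=
    intervalIntegral.integrableOn_Ioo_rpow_iff one_pos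
  refine ⟨(integrableOn_rpow_iff _).2 (by linarith), ?_, fun p hp => ?_⟩
  · exact (((integrableOn_rpow_iff _).2 (by linarith)).const_mul _).add
      (((integrableOn_rpow_iff _).2 (by linarith)).const_mul _)
  · have hβ : |β| = δ := by simp [β, hδ.le]
    have hp' : 3 < p * (2 * (1 - δ)) := (div_lt_iff₀ (by linarith)).1 hp
    rw [hβ, integrableOn_Ioo_const_mul_rpow_rpow_mul_pow_iff hδ one_pos, not_lt]
    push_cast
    linarith
end

section
/- Let X and Y be Banach spaces of real-valued (resp. ℝ³-valued) measurable functions on ℝ³ whose duals X*, Y* are also spaces of measurable functions, with duality given by integration. Define condition (C1): for all A ∈ Y*, |A|² ∈ X*; and (C2): for all ρ ∈ X and A ∈ Y*, ρA ∈ Y. Then (C1) and (C2) are equivalent. -/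
/-!
For `ρ ∈ X` and `A, A' ∈ Y*`, polarization writes `ρ A·A'` as
`½ ρ (|A + A'|² - |A|² - |A'|²)`; since `Y*` is closed under addition, (C1) makes each term
integrable, which by the bidual description of `Y` is exactly `ρ A ∈ Y`.
Conversely, pairing `ρ A ∈ Y` with `A ∈ Y*` gives the integrability of `ρ |A|²`.
-/

open MeasureTheory

section

variable {α ι : Type*} [Fintype ι]

theorem sum_smul_mul_eq_polarization (r : ℝ) (a b : ι → ℝ) :
    ∑ i, (r • a) i * b i =
      2⁻¹ * ((∑ i, (a + b) i ^ 2) * r - (∑ i, a i ^ 2) * r - (∑ i, b i ^ 2) * r) := by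
  simp only [Finset.sum_mul, ← Finset.sum_sub_distrib, Finset.mul_sum]
  refine Finset.sum_congr rfl fun i _ => ?_
  simp only [Pi.smul_apply, Pi.add_apply, smul_eq_mul]
  ring

theorem sum_smul_mul_self (r : ℝ) (a : ι → ℝ) :
    ∑ i, (r • a) i * a i = (∑ i, a i ^ 2) * r := by
  simp only [Finset.sum_mul]
  exact Finset.sum_congr rfl fun i _ => by simp only [Pi.smul_apply, smul_eq_mul]; ring

variable [MeasurableSpace α] {μ : Measure α}

theorem measurable_sum_sq {A : α → ι → ℝ} (hA : Measurable A) :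
    Measurable fun x => ∑ i, A x i ^ 2 :=
  Finset.measurable_sum _ fun i _ => ((measurable_pi_apply i).comp hA).pow_const 2

theorem add_mem_of_mem_iff_integrable_sum_mul {Y S : Set (α → ι → ℝ)}
    (hS : ∀ A, A ∈ S ↔
      Measurable A ∧ ∀ j ∈ Y, Integrable (fun x => ∑ i, j x i * A x i) μ)
    {A A' : α → ι → ℝ} (hA : A ∈ S) (hA' : A' ∈ S) : A + A' ∈ S := by
  refine (hS _).2 ⟨((hS A).1 hA).1.add ((hS A').1 hA').1, fun j hj => ?_⟩
  refine ((((hS A).1 hA).2 j hj).add (((hS A').1 hA').2 j hj)).congr (ae_of_all _ fun x => ?_)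
  simp only [Pi.add_apply, mul_add, Finset.sum_add_distrib]

end

/-- Theorem 2 of the paper: equivalence of the two compatibility conditions.
`X` (particle densities) and `Y` (current densities) are Banach spaces of measurable
functions on `ℝ³`; their duals `Xstar`, `Ystar` are again spaces of measurable functions,
with duality given by integration (encoded by the characterizations `hXstar`, `hYstar`,
and the bidual characterization `hYbidual` of `Y`, cf. Theorem A.1).
Condition (C1): `|A|² ∈ X*` for every `A ∈ Y*`.
Condition (C2): `ρ A ∈ Y` for all `ρ ∈ X`, `A ∈ Y*`.  Then (C1) ↔ (C2). -/
theorem compatibility_C1_iff_C2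
    (X Xstar : Set ((Fin 3 → ℝ) → ℝ))
    (Y Ystar : Set ((Fin 3 → ℝ) → (Fin 3 → ℝ)))
    (hXmeas : ∀ f ∈ X, Measurable f)
    (hXstar : ∀ g : (Fin 3 → ℝ) → ℝ,
      g ∈ Xstar ↔ Measurable g ∧ ∀ f ∈ X,
        Integrable (fun x => g x * f x) volume)
    (hYstar : ∀ A : (Fin 3 → ℝ) → (Fin 3 → ℝ),
      A ∈ Ystar ↔ Measurable A ∧ ∀ j ∈ Y,
        Integrable (fun x => ∑ i, j x i * A x i) volume)
    (hYbidual : ∀ j : (Fin 3 → ℝ) → (Fin 3 → ℝ),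
      j ∈ Y ↔ Measurable j ∧ ∀ A ∈ Ystar,
        Integrable (fun x => ∑ i, j x i * A x i) volume) :
    (∀ A ∈ Ystar, (fun x => ∑ i, (A x i) ^ 2) ∈ Xstar) ↔
      (∀ ρ ∈ X, ∀ A ∈ Ystar, (fun x => ρ x • A x) ∈ Y) := by
  constructor
  · intro hC1 ρ hρ A hA
    refine (hYbidual _).2 ⟨(hXmeas ρ hρ).smul ((hYstar A).1 hA).1, fun A' hA' => ?_⟩
    have hint : ∀ B ∈ Ystar, Integrable (fun x => (∑ i, B x i ^ 2) * ρ x) volume :=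
      fun B hB => ((hXstar _).1 (hC1 B hB)).2 ρ hρ
    have hsum := add_mem_of_mem_iff_integrable_sum_mul hYstar hA hA'
    refine ((((hint _ hsum).sub (hint A hA)).sub (hint A' hA')).const_mul 2⁻¹).congr
      (ae_of_all _ fun x => ?_)
    simp only [sum_smul_mul_eq_polarization, Pi.sub_apply, Pi.add_apply]
  · intro hC2 A hA
    refine (hXstar _).2 ⟨measurable_sum_sq ((hYstar A).1 hA).1, fun ρ hρ => ?_⟩
    simpa only [sum_smul_mul_self] using ((hYstar A).1 hA).2 _ (hC2 ρ hρ A hA)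
end
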